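/- In algorithm AlgAU, if the graph G (with diameter at most D) is good at time t, then for every i ≥ 0, each node experiences at least i type AA transitions (clock increments) during the time interval [t, ϱ^{D+i}(t)), where ϱ is the round operator of the asynchronous schedule. -/

import Mathlib

/-!
In a good configuration every node is able and neighboring levels are at most one step apart
on the cycle `-k, …, -1, 1, …, k` of length `2k = 6D + 4`. Since this exceeds `2D + 1`, the
levels unwrap along shortest paths to integer heights `H` that change by at most one along
edges and lie within `D` of each other. While such heights exist, an activated node performs
an AA transition exactly when it is a local minimum of `H`, raising its height by one, and
every other node keeps its turn; so heights persist as "initial height + number of AA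
transitions". Hence each round raises the minimum height by one, and after `D + i` rounds a
node whose initial height was at most `min + D` has height at least `min + D + i`.
-/

set_option autoImplicit false

/-- A turn of AlgAU: able turns `Able(ℓ)` for `1 ≤ |ℓ| ≤ k` and faulty turns
`Faulty(ℓ)` for `2 ≤ |ℓ| ≤ k`. -/
inductive Turn where
  | able (ℓ : ℤ)
  | faulty (ℓ : ℤ)
deriving DecidableEq

/-- The level of a turn. -/
def Turn.level : Turn → ℤ
  | .able ℓ => ℓ
  | .faulty ℓ => ℓ

/-- Whether a turn is able. -/
def Turn.isAble : Turn → Prop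
  | .able _ => True
  | .faulty _ => False

/-- A turn belongs to the state set of AlgAU with parameter `k`. -/
def ValidTurn (k : ℤ) : Turn → Prop
  | .able ℓ => 1 ≤ |ℓ| ∧ |ℓ| ≤ k
  | .faulty ℓ => 2 ≤ |ℓ| ∧ |ℓ| ≤ k

/-- The forward operator: `φ(-1) = 1`, `φ(k) = -k`, `φ(ℓ) = ℓ + 1` otherwise. -/
def forwardOp (k : ℤ) (ℓ : ℤ) : ℤ :=
  if ℓ = -1 then 1 else if ℓ = k then -k else ℓ + 1

/-- Levels `ℓ, ℓ'` are adjacent: `ℓ' ∈ {ℓ, φ(ℓ), φ⁻¹(ℓ)}`. -/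
def adjLvl (k : ℤ) (ℓ ℓ' : ℤ) : Prop :=
  ℓ' = ℓ ∨ ℓ' = forwardOp k ℓ ∨ ℓ = forwardOp k ℓ'

/-- `ψ⁻¹(ℓ)`: the level one unit inwards of `ℓ` (same sign, absolute value decreased). -/
def inwd (ℓ : ℤ) : ℤ := if 0 < ℓ then ℓ - 1 else ℓ + 1

/-- `m` is strictly outwards of `ℓ`: same sign and strictly larger absolute value. -/
def strictOut (ℓ m : ℤ) : Prop := (0 < ℓ ∧ ℓ < m) ∨ (ℓ < 0 ∧ m < ℓ)

/-- The inclusive neighborhood `N⁺(v)`. -/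
def closedNbhd {V : Type} (G : SimpleGraph V) (v : V) : Set V := {u | u = v ∨ G.Adj u v}

/-- Node `v` is protected under configuration `c`: all incident edges have adjacent
endpoint levels. -/
def NodeProt {V : Type} (k : ℤ) (G : SimpleGraph V) (c : V → Turn) (v : V) : Prop :=
  ∀ u, G.Adj u v → adjLvl k ((c v).level) ((c u).level)

/-- Node `v` is good: protected and sensing no faulty turn. -/
def NodeGood {V : Type} (k : ℤ) (G : SimpleGraph V) (c : V → Turn) (v : V) : Prop :=
  NodeProt k G c v ∧ ∀ u ∈ closedNbhd G v, (c u).isAble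

/-- Condition for a type AA transition of `v` from `Able(ℓ)` to `Able(φ(ℓ))`:
`v` is good and all sensed levels belong to `{ℓ, φ(ℓ)}`. -/
def AAcond {V : Type} (k : ℤ) (G : SimpleGraph V) (c : V → Turn) (v : V) (ℓ : ℤ) : Prop :=
  c v = .able ℓ ∧ NodeGood k G c v ∧
    ∀ u ∈ closedNbhd G v, (c u).level = ℓ ∨ (c u).level = forwardOp k ℓ

/-- Condition for a type AF transition of `v` from `Able(ℓ)` to `Faulty(ℓ)`
(`2 ≤ |ℓ|`): `v` is not protected or senses the turn `Faulty(ψ⁻¹(ℓ))`. -/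
def AFcond {V : Type} (k : ℤ) (G : SimpleGraph V) (c : V → Turn) (v : V) (ℓ : ℤ) : Prop :=
  c v = .able ℓ ∧ 2 ≤ |ℓ| ∧
    (¬ NodeProt k G c v ∨ ∃ u ∈ closedNbhd G v, c u = .faulty (inwd ℓ))

/-- Condition for a type FA transition of `v` from `Faulty(ℓ)` to `Able(ψ⁻¹(ℓ))`:
`v` senses no level strictly outwards of `ℓ`. -/
def FAcond {V : Type} (G : SimpleGraph V) (c : V → Turn) (v : V) (ℓ : ℤ) : Prop :=
  c v = .faulty ℓ ∧ ∀ u ∈ closedNbhd G v, ¬ strictOut ℓ ((c u).level)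

/-- The new turn `q` of an activated node `v` in one step of AlgAU. -/
def StepNode {V : Type} (k : ℤ) (G : SimpleGraph V) (c : V → Turn) (v : V) (q : Turn) : Prop :=
  (∀ ℓ, AAcond k G c v ℓ → q = .able (forwardOp k ℓ)) ∧
  (∀ ℓ, AFcond k G c v ℓ → ¬ AAcond k G c v ℓ → q = .faulty ℓ) ∧
  (∀ ℓ, FAcond G c v ℓ → q = .able (inwd ℓ)) ∧
  ((∀ ℓ, ¬ AAcond k G c v ℓ ∧ ¬ AFcond k G c v ℓ ∧ ¬ FAcond G c v ℓ) → q = c v)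

/-- One asynchronous step of AlgAU with activation set `A`: activated nodes follow
the transition rules, the others keep their turns. -/
def Step {V : Type} (k : ℤ) (G : SimpleGraph V) (A : Set V) (c c' : V → Turn) : Prop :=
  ∀ v, (v ∉ A → c' v = c v) ∧ (v ∈ A → StepNode k G c v (c' v))

/-- The level at position `n` (read modulo `2k`) of the cycle `-k, …, -1, 1, …, k`. -/
def cycLevel (k n : ℤ) : ℤ :=
  if n % (2 * k) < k then n % (2 * k) - k else n % (2 * k) - k + 1

section CycLevel

variable {k : ℤ}

lemma cycLevel_congr {a b : ℤ} (h : a ≡ b [ZMOD 2 * k]) : cycLevel k a = cycLevel k b := by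
  simp only [cycLevel, h.eq]

lemma modEq_of_cycLevel_eq (hk : 0 < k) {a b : ℤ} (h : cycLevel k a = cycLevel k b) :
    a ≡ b [ZMOD 2 * k] := by
  have := Int.emod_nonneg a (by omega : 2 * k ≠ 0)
  have := Int.emod_nonneg b (by omega : 2 * k ≠ 0)
  have := Int.emod_lt_of_pos a (by omega : 0 < 2 * k)
  have := Int.emod_lt_of_pos b (by omega : 0 < 2 * k)
  unfold cycLevel at h
  unfold Int.ModEq
  split_ifs at h <;> omega

lemma cycLevel_eq_iff (hk : 0 < k) {a b : ℤ} : cycLevel k a = cycLevel k b ↔ a ≡ b [ZMOD 2 * k] :=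
  ⟨modEq_of_cycLevel_eq hk, cycLevel_congr⟩

lemma cycLevel_of_mem_Ico {n : ℤ} (h0 : 0 ≤ n) (h1 : n < 2 * k) :
    cycLevel k n = if n < k then n - k else n - k + 1 := by
  simp only [cycLevel, Int.emod_eq_of_lt h0 h1]

lemma forwardOp_cycLevel (hk : 0 < k) (n : ℤ) :
    forwardOp k (cycLevel k n) = cycLevel k (n + 1) := by
  have h0 := Int.emod_nonneg n (by omega : 2 * k ≠ 0)
  have h1 := Int.emod_lt_of_pos n (by omega : 0 < 2 * k)
  rw [cycLevel_congr ((Int.mod_modEq n (2 * k)).symm.add_right 1)]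
  rcases (by omega : n % (2 * k) + 1 < 2 * k ∨ n % (2 * k) + 1 = 2 * k) with hlt | heq
  · rw [cycLevel_of_mem_Ico (by omega) hlt]
    unfold cycLevel forwardOp
    split_ifs <;> omega
  · have : cycLevel k (n % (2 * k) + 1) = cycLevel k 0 :=
      cycLevel_congr (by simp [heq, Int.ModEq])
    rw [this, cycLevel_of_mem_Ico le_rfl (by omega)]
    unfold cycLevel forwardOp
    split_ifs <;> omega

lemma cycLevel_ne_of_lt {a b : ℤ} (hab : a < b) (hba : b - a < 2 * k) :
    cycLevel k a ≠ cycLevel k b := fun h =>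
  absurd (Int.eq_zero_of_dvd_of_nonneg_of_lt (by omega) hba
    (modEq_of_cycLevel_eq (by omega) h).dvd) (by omega)

lemma exists_cycLevel_of_validTurn {q : Turn} (hq : ValidTurn k q) (hable : q.isAble) :
    ∃ n, q = .able (cycLevel k n) := by
  cases q with
  | faulty ℓ => exact hable.elim
  | able ℓ =>
    obtain ⟨h1, h2⟩ := hq
    refine ⟨if 0 < ℓ then ℓ + k - 1 else ℓ + k, ?_⟩
    rw [Turn.able.injEq]
    rcases abs_cases ℓ with ⟨h, _⟩ | ⟨h, _⟩ <;> rw [h] at h1 h2 <;>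
      split_ifs <;> rw [cycLevel_of_mem_Ico (by omega) (by omega)] <;> split_ifs <;> omega

lemma adjLvl_cycLevel (hk : 0 < k) {a b : ℤ} (h : |b - a| ≤ 1) :
    adjLvl k (cycLevel k a) (cycLevel k b) := by
  rcases (by rw [abs_le] at h; omega : b = a ∨ b = a + 1 ∨ a = b + 1) with rfl | rfl | rfl
  · exact .inl rfl
  · exact .inr (.inl (forwardOp_cycLevel hk a).symm)
  · exact .inr (.inr (forwardOp_cycLevel hk b).symm)

lemma exists_modEq_of_adjLvl (hk : 0 < k) {a b : ℤ} (h : adjLvl k (cycLevel k a) (cycLevel k b)) :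
    ∃ e, |e| ≤ 1 ∧ b ≡ a + e [ZMOD 2 * k] := by
  simp only [adjLvl, forwardOp_cycLevel hk, cycLevel_eq_iff hk] at h
  rcases h with h | h | h
  · exact ⟨0, by simp, by simpa using h⟩
  · exact ⟨1, by simp, h⟩
  · exact ⟨-1, by simp, by simpa [← sub_eq_add_neg] using h.symm.sub_right 1⟩

end CycLevel

namespace SimpleGraph

variable {V : Type*} {G : SimpleGraph V} {n : ℤ} {f : V → ℤ}

lemma Walk.exists_modEq_add (hf : ∀ u v, G.Adj u v → ∃ e, |e| ≤ 1 ∧ f v ≡ f u + e [ZMOD n])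
    {u v : V} (p : G.Walk u v) : ∃ δ : ℤ, |δ| ≤ p.length ∧ f v ≡ f u + δ [ZMOD n] := by
  induction p with
  | nil => exact ⟨0, by simp, by simp⟩
  | @cons u w v huw p ih =>
    obtain ⟨δ, hδ, hwv⟩ := ih
    obtain ⟨e, he, huw⟩ := hf u w huw
    refine ⟨e + δ, ?_, ?_⟩
    · rw [Walk.length_cons, Nat.cast_succ]
      linarith [abs_add_le e δ]
    · rw [← add_assoc]
      exact hwv.trans (huw.add_right δ)

theorem Connected.exists_lift (hG : G.Connected) {D : ℕ} (hdiam : ∀ u v, G.dist u v ≤ D)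
    (hn : 2 * D + 1 < n) (hf : ∀ u v, G.Adj u v → ∃ e, |e| ≤ 1 ∧ f v ≡ f u + e [ZMOD n])
    (w : V) : ∃ H : V → ℤ, (∀ v, H v ≡ f v [ZMOD n]) ∧ (∀ u v, G.Adj u v → |H v - H u| ≤ 1) ∧
      ∀ v, |H v - H w| ≤ D := by
  have hshort : ∀ v, ∃ δ : ℤ, |δ| ≤ G.dist w v ∧ f v ≡ f w + δ [ZMOD n] := fun v => by
    obtain ⟨p, hp⟩ := hG.exists_walk_length_eq_dist w v
    exact hp ▸ p.exists_modEq_add hf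
  choose δ hδdist hδf using hshort
  have hδ : ∀ v, |δ v| ≤ D := fun v => (hδdist v).trans (by exact_mod_cast hdiam w v)
  have hδw : δ w = 0 := abs_nonpos_iff.1 (by simpa using hδdist w)
  refine ⟨fun v => f w + δ v, fun v => (hδf v).symm, fun u v huv => ?_, fun v => ?_⟩
  · obtain ⟨e, he, huv⟩ := hf u v huv
    have hmod : δ v ≡ δ u + e [ZMOD n] := Int.ModEq.add_left_cancel' (f w) <| by
      rw [← add_assoc]
      exact (hδf v).symm.trans (huv.trans ((hδf u).add_right e))
    -- `δ u + e - δ v` is divisible by `n` but has absolute value at most `2D + 1 < n`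
    have hzero := Int.eq_zero_of_abs_lt_dvd hmod.dvd <| by
      rw [abs_lt]
      have := abs_le.1 (hδ u); have := abs_le.1 (hδ v); have := abs_le.1 he
      constructor <;> linarith
    rw [add_sub_add_left_eq_sub, show δ v - δ u = e by linarith]
    exact he
  · simpa [hδw] using hδ v

end SimpleGraph

def IsAA (k : ℤ) (q q' : Turn) : Prop :=
  ∃ ℓ, q = .able ℓ ∧ q' = .able (forwardOp k ℓ)

def IsHeight {V : Type} (k : ℤ) (G : SimpleGraph V) (c : V → Turn) (H : V → ℤ) : Prop :=
  (∀ v, c v = .able (cycLevel k (H v))) ∧ ∀ u v, G.Adj u v → H u ≤ H v + 1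

namespace IsHeight

variable {V : Type} {k : ℤ} {G : SimpleGraph V} {A : Set V} {c c' : V → Turn} {H : V → ℤ}

lemma nodeGood (hk : 0 < k) (hH : IsHeight k G c H) (v : V) : NodeGood k G c v := by
  refine ⟨fun u huv => ?_, fun u _ => by rw [hH.1 u]; trivial⟩
  rw [hH.1 u, hH.1 v]
  exact adjLvl_cycLevel hk (abs_le.2 ⟨by linarith [hH.2 v u huv.symm], by linarith [hH.2 u v huv]⟩)

lemma stepNode_of_le (hk : 0 < k) (hH : IsHeight k G c H) {v : V} {q : Turn}
    (hq : StepNode k G c v q) (hmin : ∀ u, G.Adj u v → H v ≤ H u) :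
    q = .able (cycLevel k (H v + 1)) := by
  rw [← forwardOp_cycLevel hk]
  refine hq.1 _ ⟨hH.1 v, hH.nodeGood hk v, fun u hu => ?_⟩
  rw [hH.1 u, forwardOp_cycLevel hk]
  rcases hu with rfl | huv
  · exact .inl rfl
  · rcases (by have := hmin u huv; have := hH.2 u v huv; omega : H u = H v ∨ H u = H v + 1)
      with h | h <;> simp [h, Turn.level]

lemma stepNode_of_lt (hk : 2 ≤ k) (hH : IsHeight k G c H) {u v : V} {q : Turn}
    (hq : StepNode k G c v q) (huv : G.Adj u v) (hlt : H u < H v) : q = c v := by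
  have hu : H u + 1 = H v := by linarith [hH.2 v u huv.symm]
  refine hq.2.2.2 fun ℓ => ⟨fun ⟨hv, _, hsense⟩ => ?_, fun ⟨_, _, hbad⟩ => ?_, fun ⟨hv, _⟩ => ?_⟩
  · rw [hH.1 v, Turn.able.injEq] at hv
    have hsu := hsense u (.inr huv)
    rw [hH.1 u, ← hv, forwardOp_cycLevel (by omega), ← hu, add_assoc] at hsu
    rcases hsu with h | h
    · exact cycLevel_ne_of_lt (lt_add_one _) (by omega) h
    · exact cycLevel_ne_of_lt (by omega) (by omega) h
  · rcases hbad with hprot | ⟨w, -, hw⟩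
    · exact hprot (hH.nodeGood (by omega) v).1
    · rw [hH.1 w] at hw
      exact Turn.noConfusion hw
  · rw [hH.1 v] at hv
    exact Turn.noConfusion hv

lemma step_cases (hk : 2 ≤ k) (hH : IsHeight k G c H) (hstep : Step k G A c c') (v : V) :
    (v ∈ A ∧ (∀ u, G.Adj u v → H v ≤ H u) ∧ c' v = .able (cycLevel k (H v + 1))) ∨
      (¬ (v ∈ A ∧ ∀ u, G.Adj u v → H v ≤ H u) ∧ c' v = c v) := by
  by_cases hv : v ∈ A
  · by_cases hmin : ∀ u, G.Adj u v → H v ≤ H u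
    · exact .inl ⟨hv, hmin, hH.stepNode_of_le (by omega) ((hstep v).2 hv) hmin⟩
    · push Not at hmin
      obtain ⟨u, huv, hlt⟩ := hmin
      exact .inr ⟨fun h => (h.2 u huv).not_gt hlt, hH.stepNode_of_lt hk ((hstep v).2 hv) huv hlt⟩
  · exact .inr ⟨fun h => hv h.1, (hstep v).1 hv⟩

lemma isAA_iff (hk : 2 ≤ k) (hH : IsHeight k G c H) (hstep : Step k G A c c') (v : V) :
    IsAA k (c v) (c' v) ↔ v ∈ A ∧ ∀ u, G.Adj u v → H v ≤ H u := by
  rcases hH.step_cases hk hstep v with ⟨hv, hmin, hc'⟩ | ⟨hnot, hc'⟩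
  · refine iff_of_true ⟨_, hH.1 v, ?_⟩ ⟨hv, hmin⟩
    rw [hc', forwardOp_cycLevel (by omega)]
  · refine iff_of_false ?_ hnot
    rintro ⟨ℓ, hℓ, hφℓ⟩
    rw [hc', hℓ, Turn.able.injEq] at hφℓ
    rw [hH.1 v, Turn.able.injEq] at hℓ
    rw [← hℓ, forwardOp_cycLevel (by omega)] at hφℓ
    exact cycLevel_ne_of_lt (lt_add_one _) (by omega) hφℓ

lemma step (hk : 2 ≤ k) (hH : IsHeight k G c H) (hstep : Step k G A c c') {H' : V → ℤ}
    (hAA : ∀ v, IsAA k (c v) (c' v) → H' v = H v + 1)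
    (hnAA : ∀ v, ¬ IsAA k (c v) (c' v) → H' v = H v) : IsHeight k G c' H' := by
  have hmono : ∀ v, H v ≤ H' v := fun v => by
    by_cases h : IsAA k (c v) (c' v) <;> simp [hAA, hnAA, h]
  refine ⟨fun v => ?_, fun u v huv => ?_⟩
  · rcases hH.step_cases hk hstep v with ⟨hv, hmin, hc'⟩ | ⟨hnot, hc'⟩
    · rw [hc', hAA v ((hH.isAA_iff hk hstep v).2 ⟨hv, hmin⟩)]
    · rw [hc', hnAA v (mt (hH.isAA_iff hk hstep v).1 hnot), hH.1 v]
  · by_cases hu : IsAA k (c u) (c' u)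
    · have := ((hH.isAA_iff hk hstep u).1 hu).2 v huv.symm
      linarith [hAA u hu, hmono v]
    · linarith [hnAA u hu, hH.2 u v huv, hmono v]

end IsHeight

theorem exists_isHeight {V : Type} {k : ℤ} {G : SimpleGraph V} {c : V → Turn}
    (hconn : G.Connected) {D : ℕ} (hdiam : ∀ u v, G.dist u v ≤ D) (hk : 2 * D + 1 < 2 * k)
    (hvalid : ∀ v, ValidTurn k (c v)) (hgood : ∀ v, NodeGood k G c v) (w : V) :
    ∃ H, IsHeight k G c H ∧ ∀ v, |H v - H w| ≤ D := by
  choose f hf using fun v => exists_cycLevel_of_validTurn (hvalid v) ((hgood v).2 v (.inl rfl))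
  have hfadj : ∀ u v, G.Adj u v → ∃ e, |e| ≤ 1 ∧ f v ≡ f u + e [ZMOD 2 * k] := by
    intro u v huv
    have hprot := (hgood u).1 v huv.symm
    rw [hf u, hf v] at hprot
    exact exists_modEq_of_adjLvl (by omega) hprot
  obtain ⟨H, hHf, hHadj, hHw⟩ := hconn.exists_lift hdiam hk hfadj w
  exact ⟨H, ⟨fun v => by rw [hf v, cycLevel_congr (hHf v)],
    fun u v huv => by linarith [(abs_le.1 (hHadj v u huv.symm)).2]⟩, hHw⟩

section Count

variable (P : ℕ → Prop) {t T : ℕ}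

lemma ncard_setOf_lt_succ_of_pos (htT : t ≤ T) (hP : P T) :
    {s | t ≤ s ∧ s < T + 1 ∧ P s}.ncard = {s | t ≤ s ∧ s < T ∧ P s}.ncard + 1 := by
  have hins : {s | t ≤ s ∧ s < T + 1 ∧ P s} = insert T {s | t ≤ s ∧ s < T ∧ P s} := by
    ext s
    simp only [Set.mem_insert_iff, Set.mem_ofPred_eq]
    constructor
    · rintro ⟨hts, hsT, hPs⟩
      rcases Nat.lt_succ_iff_lt_or_eq.1 hsT with hlt | rfl
      exacts [.inr ⟨hts, hlt, hPs⟩, .inl rfl]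
    · rintro (rfl | ⟨hts, hsT, hPs⟩)
      exacts [⟨htT, Nat.lt_add_one _, hP⟩, ⟨hts, hsT.trans (Nat.lt_add_one _), hPs⟩]
  rw [hins, Set.ncard_insert_of_notMem (fun h => h.2.1.false)
    ((Set.finite_Iio T).subset fun s hs => hs.2.1)]

lemma setOf_lt_succ_of_neg (hP : ¬ P T) :
    {s | t ≤ s ∧ s < T + 1 ∧ P s} = {s | t ≤ s ∧ s < T ∧ P s} := by
  ext s
  simp only [Set.mem_ofPred_eq, Nat.lt_succ_iff_lt_or_eq]
  constructor
  · rintro ⟨hts, hlt | rfl, hPs⟩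
    exacts [⟨hts, hlt, hPs⟩, (hP hPs).elim]
  · rintro ⟨hts, hsT, hPs⟩
    exact ⟨hts, .inl hsT, hPs⟩

end Count

noncomputable def aaCount {V : Type} (k : ℤ) (σ : ℕ → V → Turn) (v : V) (t T : ℕ) : ℕ :=
  {s | t ≤ s ∧ s < T ∧ IsAA k (σ s v) (σ (s + 1) v)}.ncard

section Trajectory

variable {V : Type} {k : ℤ} {G : SimpleGraph V} {σ : ℕ → V → Turn} {v : V} {t T : ℕ}

lemma aaCount_self : aaCount k σ v t t = 0 := by
  rw [aaCount, ← Set.ncard_empty ℕ]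
  congr 1
  ext s
  simp only [Set.mem_ofPred_eq, Set.mem_empty_iff_false, iff_false]
  omega

lemma aaCount_succ_of_isAA (htT : t ≤ T) (h : IsAA k (σ T v) (σ (T + 1) v)) :
    aaCount k σ v t (T + 1) = aaCount k σ v t T + 1 :=
  ncard_setOf_lt_succ_of_pos (fun s => IsAA k (σ s v) (σ (s + 1) v)) htT h

lemma aaCount_succ_of_not_isAA (h : ¬ IsAA k (σ T v) (σ (T + 1) v)) :
    aaCount k σ v t (T + 1) = aaCount k σ v t T := by
  rw [aaCount, setOf_lt_succ_of_neg (fun s => IsAA k (σ s v) (σ (s + 1) v)) h, aaCount]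

lemma isHeight_add_aaCount (hk : 2 ≤ k) {A : ℕ → Set V}
    (hstep : ∀ s, Step k G (A s) (σ s) (σ (s + 1))) {H₀ : V → ℤ}
    (hH₀ : IsHeight k G (σ t) H₀) (s : ℕ) (hts : t ≤ s) :
    IsHeight k G (σ s) (fun v => H₀ v + aaCount k σ v t s) := by
  induction s, hts using Nat.le_induction with
  | base => simpa [aaCount_self] using hH₀
  | succ s hts ih =>
    refine ih.step hk (hstep s) (fun v h => ?_) (fun v h => ?_)
    · rw [aaCount_succ_of_isAA hts h]; push_cast; ring
    · rw [aaCount_succ_of_not_isAA h]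

end Trajectory

theorem add_le_of_round {V : Type*} (A : ℕ → Set V) (ϱ : ℕ → ℕ)
    (hϱ : ∀ s, s ≤ ϱ s ∧ ∀ v, ∃ s', s ≤ s' ∧ s' < ϱ s ∧ v ∈ A s') (h : ℕ → V → ℤ) {t : ℕ}
    (hmono : ∀ v, MonotoneOn (h · v) (Set.Ici t))
    (hmin : ∀ s, t ≤ s → ∀ v ∈ A s, (∀ u, h s v ≤ h s u) → h s v < h (s + 1) v)
    {m : ℤ} (hm : ∀ v, m ≤ h t v) (j : ℕ) (v : V) : m + j ≤ h (ϱ^[j] t) v := by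
  induction j generalizing v with
  | zero => simpa using hm v
  | succ j ih =>
    have ht₀ : t ≤ ϱ^[j] t := Function.id_le_iterate_of_id_le (fun s => (hϱ s).1) j t
    obtain ⟨s, hs₀, hsϱ, hvA⟩ := (hϱ (ϱ^[j] t)).2 v
    have hts : t ≤ s := ht₀.trans hs₀
    have hall : ∀ u, m + j ≤ h s u := fun u => (ih u).trans (hmono u ht₀ hts hs₀)
    have hnext : m + (j + 1 : ℕ) ≤ h (s + 1) v := by
      have hup : h s v ≤ h (s + 1) v := hmono v hts (hts.trans s.le_succ) s.le_succ
      by_cases hlt : m + j < h s v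
      · push_cast; omega
      · have := hmin s hts v hvA fun u => (not_lt.1 hlt).trans (hall u)
        have := hall v
        push_cast; omega
    rw [Function.iterate_succ_apply']
    exact hnext.trans (hmono v (hts.trans s.le_succ) (ht₀.trans (hϱ _).1) hsϱ)

theorem stmt_8_general {V : Type} (G : SimpleGraph V) (hconn : G.Connected)
    (D : ℕ) (hdiam : ∀ u v : V, G.dist u v ≤ D)
    (k : ℤ) (hk : k = 3 * D + 2)
    (σ : ℕ → V → Turn) (A : ℕ → Set V)
    (hvalid : ∀ t v, ValidTurn k (σ t v))
    (hstep : ∀ t, Step k G (A t) (σ t) (σ (t + 1)))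
    (ϱ : ℕ → ℕ)
    (hϱ : ∀ s : ℕ, s ≤ ϱ s ∧ ∀ v : V, ∃ s', s ≤ s' ∧ s' < ϱ s ∧ v ∈ A s')
    (t : ℕ) (hgood : ∀ v, NodeGood k G (σ t) v) :
    ∀ (i : ℕ) (v : V),
      i ≤ Set.ncard {s : ℕ | t ≤ s ∧ s < ϱ^[D + i] t ∧
        ∃ ℓ, σ s v = .able ℓ ∧ σ (s + 1) v = .able (forwardOp k ℓ)} := by
  intro i w
  have hk2 : 2 ≤ k := by omega
  obtain ⟨H₀, hH₀, hH₀w⟩ := exists_isHeight hconn hdiam (by omega) (hvalid t) hgood w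
  have hmono : ∀ v, MonotoneOn (fun s => H₀ v + (aaCount k σ v t s : ℤ)) (Set.Ici t) :=
    fun v => monotoneOn_nat_Ici_of_le_succ fun s hs => by
      by_cases hAA : IsAA k (σ s v) (σ (s + 1) v)
      · simp [aaCount_succ_of_isAA hs hAA]
      · simp [aaCount_succ_of_not_isAA hAA]
  have hmin_advances : ∀ s, t ≤ s → ∀ v ∈ A s,
      (∀ u, H₀ v + (aaCount k σ v t s : ℤ) ≤ H₀ u + aaCount k σ u t s) →
      H₀ v + (aaCount k σ v t s : ℤ) < H₀ v + aaCount k σ v t (s + 1) := by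
    intro s hs v hvA hmin
    have hAA := ((isHeight_add_aaCount hk2 hstep hH₀ s hs).isAA_iff hk2 (hstep s) v).2
      ⟨hvA, fun u _ => hmin u⟩
    simp [aaCount_succ_of_isAA hs hAA]
  have hbase : ∀ v, H₀ w - D ≤ H₀ v + (aaCount k σ v t t : ℤ) := fun v => by
    rw [aaCount_self]
    linarith [(abs_le.1 (hH₀w v)).1]
  have hround := add_le_of_round A ϱ hϱ _ hmono hmin_advances hbase (D + i) w
  change i ≤ aaCount k σ w t _
  push_cast at hround
  omega

/-- in AlgAU, if the graph (of diameter at most `D`) is good at time `t`,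
then for every `i ≥ 0`, each node experiences at least `i` type AA transitions (clock
increments) during the time interval `[t, ϱ^{D+i}(t))`, where `ϱ` is the round operator
of the asynchronous schedule (every node is activated at least once in `[s, ϱ(s))`). -/
theorem stmt_8 {V : Type} [Fintype V] (G : SimpleGraph V) (hconn : G.Connected)
    (D : ℕ) (hdiam : ∀ u v : V, G.dist u v ≤ D)
    (k : ℤ) (hk : k = 3 * D + 2)
    (σ : ℕ → V → Turn) (A : ℕ → Set V)
    (hvalid : ∀ t v, ValidTurn k (σ t v))
    (hstep : ∀ t, Step k G (A t) (σ t) (σ (t + 1)))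
    (ϱ : ℕ → ℕ)
    (hϱ : ∀ s : ℕ, s ≤ ϱ s ∧ ∀ v : V, ∃ s', s ≤ s' ∧ s' < ϱ s ∧ v ∈ A s')
    (t : ℕ) (hgood : ∀ v, NodeGood k G (σ t) v) :
    ∀ (i : ℕ) (v : V),
      i ≤ Set.ncard {s : ℕ | t ≤ s ∧ s < ϱ^[D + i] t ∧
        ∃ ℓ, σ s v = .able ℓ ∧ σ (s + 1) v = .able (forwardOp k ℓ)} :=
  stmt_8_general G hconn D hdiam k hk σ A hvalid hstep ϱ hϱ t hgood
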